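/- arXiv:1504.00596 — 3 statements merged into one kernel-verified Lean document; each statement's English description precedes it below -/
import Mathlib

section
/- Let G be any connected graph on n vertices with colouring ω from colour-set C. Then, for any d ∈ C, m(G,ω,d) ≤ n − N_d(G,ω). -/
open Classical SimpleGraph

/-- The spanning subgraph of `G` whose edges join vertices of equal colour under `ω`.
Its connected components are the monochromatic components of `(G, ω)`. -/
def monoSubgraph {V C : Type*} (G : SimpleGraph V) (ω : V → C) : SimpleGraph V where
  Adj u v := G.Adj u v ∧ ω u = ω v
  symm := ⟨fun u v h => ⟨h.1.symm, h.2.symm⟩⟩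
  loopless := ⟨fun u h => G.loopless.irrefl u h.1⟩

/-- A single flooding move `(v, d)`: every vertex in the monochromatic component of `v`
receives colour `d`. -/
noncomputable def floodMove {V C : Type*} (G : SimpleGraph V) (ω : V → C) (v : V) (d : C) :
    V → C :=
  fun u => if (monoSubgraph G ω).Reachable v u then d else ω u

/-- Apply a sequence of flooding moves, in order. -/
noncomputable def floodSeq {V C : Type*} (G : SimpleGraph V) :
    List (V × C) → (V → C) → (V → C)
  | [], ω => ω
  | m :: ms, ω => floodSeq G ms (floodMove G ω m.1 m.2)

/-- `m(G, ω, d)`: the minimum number of moves needed to give every vertex colour `d`,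
starting from the colouring `ω`. -/
noncomputable def floodCost {V C : Type*} (G : SimpleGraph V) (ω : V → C) (d : C) : ℕ :=
  sInf {k | ∃ ms : List (V × C), ms.length = k ∧ ∀ v, floodSeq G ms ω v = d}

/-- `m(G, ω)`: the minimum over target colours `d ∈ C` of `m(G, ω, d)`. -/
noncomputable def floodCostMin {V C : Type*} (G : SimpleGraph V) (ω : V → C) : ℕ :=
  sInf {k | ∃ d : C, floodCost G ω d = k}

/-- `M_c(G)`: the maximum of `m(G, ω)` over all surjective colourings
`ω : V(G) → {1, …, c}`. -/
noncomputable def maxFloodCost {V : Type*} (c : ℕ) (G : SimpleGraph V) : ℕ :=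
  sSup {k | ∃ ω : V → Fin c, Function.Surjective ω ∧ floodCostMin G ω = k}

/-! Flooding the monochromatic component of any vertex not yet coloured `d` with `d` recolours
that vertex and never un-colours a vertex already coloured `d`, so each such move strictly
shrinks the set of vertices not coloured `d`. -/

section Flood

variable {V C : Type*} (G : SimpleGraph V)

theorem floodMove_self (ω : V → C) (v : V) (d : C) : floodMove G ω v d v = d :=
  if_pos (Reachable.refl v)

theorem floodMove_apply_eq_of_apply_eq {ω : V → C} {u : V} {d : C} (hu : ω u = d) (v : V) :
    floodMove G ω v d u = d := by
  unfold floodMove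
  split_ifs
  · rfl
  · exact hu

theorem setOf_floodMove_ne_ssubset {ω : V → C} {v : V} {d : C} (hv : ω v ≠ d) :
    {u | floodMove G ω v d u ≠ d} ⊂ {u | ω u ≠ d} :=
  (Set.ssubset_iff_of_subset fun u (hu : floodMove G ω v d u ≠ d) (hω : ω u = d) =>
    hu (floodMove_apply_eq_of_apply_eq G hω v)).mpr ⟨v, hv, fun h => h (floodMove_self G ω v d)⟩

theorem exists_floodSeq_eq_const [Finite V] (ω : V → C) (d : C) :
    ∃ ms : List (V × C), ms.length ≤ {u | ω u ≠ d}.ncard ∧ ∀ u, floodSeq G ms ω u = d := by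
  induction h : {u | ω u ≠ d}.ncard using Nat.strong_induction_on generalizing ω with
  | _ k ih =>
  by_cases hall : ∀ u, ω u = d
  · exact ⟨[], Nat.zero_le _, hall⟩
  obtain ⟨v, hv⟩ := not_forall.mp hall
  have hlt := h ▸ Set.ncard_lt_ncard (setOf_floodMove_ne_ssubset G hv)
  obtain ⟨ms, hlen, hms⟩ := ih _ hlt (floodMove G ω v d) rfl
  exact ⟨(v, d) :: ms, by simp only [List.length_cons]; omega, hms⟩

theorem floodCost_le_ncard_ne [Finite V] (ω : V → C) (d : C) :
    floodCost G ω d ≤ {u | ω u ≠ d}.ncard := by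
  obtain ⟨ms, hlen, hms⟩ := exists_floodSeq_eq_const G ω d
  calc floodCost G ω d ≤ ms.length := Nat.sInf_le ⟨ms, rfl, hms⟩
    _ ≤ _ := hlen

end Flood

theorem floodCost_le_sub_colourClass_general {V C : Type*} [Fintype V] (G : SimpleGraph V)
    (n : ℕ) (hn : Fintype.card V = n) (ω : V → C) (d : C) :
    floodCost G ω d ≤ n - {v : V | ω v = d}.ncard := by
  have hcompl : {v : V | ω v ≠ d} = {v : V | ω v = d}ᶜ := rfl
  calc floodCost G ω d ≤ {v : V | ω v ≠ d}.ncard := floodCost_le_ncard_ne G ω d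
    _ = n - {v : V | ω v = d}.ncard := by
      rw [hcompl, Set.ncard_compl, Nat.card_eq_fintype_card, hn]

/-- For any connected graph `G` on `n` vertices with colouring `ω` from colour-set `C`
and any `d ∈ C`, we have `m(G, ω, d) ≤ n - N_d(G, ω)`. -/
theorem floodCost_le_sub_colourClass {V C : Type*} [Fintype V] (G : SimpleGraph V)
    (hG : G.Connected) (n : ℕ) (hn : Fintype.card V = n) (ω : V → C) (d : C) :
    floodCost G ω d ≤ n - {v : V | ω v = d}.ncard :=
  floodCost_le_sub_colourClass_general G n hn ω d
end

section
/- Let G be any connected graph on n vertices. Then M_c(G) ≤ n − ⌈n/c⌉. -/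
open Classical SimpleGraph

/-! Recolouring, one move at a time, each vertex whose colour differs from a most frequent colour
`d` floods the whole graph with `d`; by pigeonhole at least `⌈n / c⌉` vertices already have
colour `d`. -/

open Finset Fintype

lemma Fintype.exists_ceilDiv_le_card_fiber {α β : Type*} [Fintype α] [Fintype β] [DecidableEq β]
    [Nonempty β] (f : α → β) : ∃ y, card α ⌈/⌉ card β ≤ #{x | f x = y} := by
  have hβ : (0 : ℚ) < card β := mod_cast card_pos
  obtain ⟨y, hy⟩ := exists_le_card_fiber_of_nsmul_le_card f (b := (card α : ℚ) / card β)
    (by rw [nsmul_eq_mul, mul_div_cancel₀ _ hβ.ne'])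
  refine ⟨y, (ceilDiv_le_iff_le_mul card_pos).2 ?_⟩
  rw [div_le_iff₀' hβ] at hy
  exact_mod_cast hy

section Flood

variable {V C : Type*} (G : SimpleGraph V)

lemma ne_of_floodMove_ne {ω : V → C} {v u : V} {d : C} (h : floodMove G ω v d u ≠ d) :
    ω u ≠ d ∧ u ≠ v := by
  have hnr : ¬ (monoSubgraph G ω).Reachable v u := fun hr => h (if_pos hr)
  rw [floodMove, if_neg hnr] at h
  exact ⟨h, by rintro rfl; exact hnr .rfl⟩

lemma floodSeq_map_eq_of_forall_mem (d : C) (L : List V) (ω : V → C)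
    (hL : ∀ u, ω u ≠ d → u ∈ L) (u : V) : floodSeq G (L.map (·, d)) ω u = d := by
  induction L generalizing ω with
  | nil => by_contra h; simpa using hL u h
  | cons v L ih =>
    refine ih _ fun w hw => ?_
    obtain ⟨hwd, hwv⟩ := ne_of_floodMove_ne G hw
    exact (List.mem_cons.1 (hL w hwd)).resolve_left hwv

lemma floodCost_le_card_ne [Fintype V] [DecidableEq C] (ω : V → C) (d : C) :
    floodCost G ω d ≤ #{u | ω u ≠ d} := by
  set L := (univ.filter fun u => ω u ≠ d).toList
  have hL : ∀ u, ω u ≠ d → u ∈ L := fun u hu => by simp [L, hu]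
  calc floodCost G ω d ≤ (L.map (·, d)).length :=
        Nat.sInf_le ⟨_, rfl, floodSeq_map_eq_of_forall_mem G d L ω hL⟩
    _ = #{u | ω u ≠ d} := by simp [L]

lemma floodCostMin_le_card_sub_card_fiber [Fintype V] [DecidableEq C] (ω : V → C) (d : C) :
    floodCostMin G ω ≤ card V - #{u | ω u = d} := by
  calc floodCostMin G ω ≤ floodCost G ω d := Nat.sInf_le ⟨d, rfl⟩
    _ ≤ #{u | ω u ≠ d} := floodCost_le_card_ne G ω d
    _ = card V - #{u | ω u = d} := by
        simp only [ne_eq, filter_not, card_univ_sdiff]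

end Flood

theorem maxFloodCost_le_sub_ceilDiv_general {V : Type*} [Fintype V] (G : SimpleGraph V)
    (n c : ℕ) (hn : Fintype.card V = n) :
    maxFloodCost c G ≤ n - (n + c - 1) / c := by
  subst hn
  refine csSup_le' ?_
  rintro _ ⟨ω, -, rfl⟩
  rcases isEmpty_or_nonempty (Fin c) with hc | hc
  · simp [floodCostMin]
  obtain ⟨d, hd⟩ := exists_ceilDiv_le_card_fiber ω
  rw [Fintype.card_fin] at hd
  exact (floodCostMin_le_card_sub_card_fiber G ω d).trans (Nat.sub_le_sub_left hd _)

/-- For any connected graph `G` on `n` vertices, `M_c(G) ≤ n - ⌈n / c⌉`. -/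
theorem maxFloodCost_le_sub_ceilDiv {V : Type*} [Fintype V] (G : SimpleGraph V)
    (hG : G.Connected) (n c : ℕ) (hn : Fintype.card V = n) :
    maxFloodCost c G ≤ n - (n + c - 1) / c :=
  maxFloodCost_le_sub_ceilDiv_general G n c hn
end

section
/- Let G be a connected graph with radius r. Then M_c(G) ≤ (c − 1)·r. -/
open Classical SimpleGraph

/-- The radius of a graph: `min_{u ∈ V} max_{v ∈ V} d(u, v)`. -/
noncomputable def graphRadius {V : Type*} [Fintype V] (G : SimpleGraph V) : ℕ :=
  ⨅ u : V, ⨆ v : V, G.dist u v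

/-!
Fix a centre `u` of `G` and repeatedly play, at `u`, every colour other than the current colour
of `u` (a round of `c - 1` moves). The monochromatic component of `u` never shrinks when moves
are played at `u`, and a round absorbs every neighbour of it, whatever that neighbour's colour.
Hence after `k` rounds the component of `u` contains the ball of radius `k` around `u`, and after
`r` rounds, i.e. `(c - 1) * r` moves, the whole graph is monochromatic.
-/

namespace SimpleGraph

lemma exists_adj_dist_le_of_dist_eq_succ {V : Type*} {G : SimpleGraph V} {u v : V} {k : ℕ}
    (h : G.dist u v = k + 1) : ∃ x, G.Adj x v ∧ G.dist u x ≤ k := by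
  have hvu : G.dist v u = k + 1 := by rw [dist_comm, h]
  obtain ⟨p, hp⟩ := exists_walk_of_dist_ne_zero (by rw [hvu]; exact k.succ_ne_zero)
  rw [hvu] at hp
  cases p with
  | nil => simp at hp
  | cons hadj q =>
    have hq : q.length = k := by simpa using hp
    refine ⟨_, hadj.symm, ?_⟩
    rw [dist_comm, ← hq]
    exact dist_le q

end SimpleGraph

section Flooding

variable {V C : Type*} {G : SimpleGraph V} {ω : V → C} {u v x : V} {d : C}

lemma colour_eq_of_reachable_monoSubgraph (h : (monoSubgraph G ω).Reachable u v) :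
    ω u = ω v := by
  rw [reachable_iff_reflTransGen] at h
  induction h with
  | refl => rfl
  | tail _ hadj ih => exact ih.trans hadj.2

lemma reachable_floodMove_of_reachable (h : (monoSubgraph G ω).Reachable u x) :
    (monoSubgraph G (floodMove G ω u d)).Reachable u x := by
  rw [reachable_iff_reflTransGen] at h ⊢
  induction h with
  | refl => rfl
  | @tail a b hua hab ih =>
    have hub : (monoSubgraph G ω).Reachable u b :=
      ((reachable_iff_reflTransGen _ _).mpr hua).trans hab.reachable
    refine ih.tail ⟨hab.1, ?_⟩
    simp [floodMove, (reachable_iff_reflTransGen _ _).mpr hua, hub]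

lemma reachable_floodMove_of_adj (hx : (monoSubgraph G ω).Reachable u x) (hadj : G.Adj x v)
    (hv : ω v = d) : (monoSubgraph G (floodMove G ω u d)).Reachable u v := by
  refine (reachable_floodMove_of_reachable hx).trans (Adj.reachable ⟨hadj, ?_⟩)
  by_cases huv : (monoSubgraph G ω).Reachable u v <;> simp [floodMove, hx, huv, hv]

lemma floodSeq_append (ms₁ ms₂ : List (V × C)) (ω : V → C) :
    floodSeq G (ms₁ ++ ms₂) ω = floodSeq G ms₂ (floodSeq G ms₁ ω) := by
  induction ms₁ generalizing ω with
  | nil => rfl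
  | cons m ms ih => exact ih _

lemma reachable_floodSeq_of_reachable (L : List C) (h : (monoSubgraph G ω).Reachable u x) :
    (monoSubgraph G (floodSeq G (L.map (u, ·)) ω)).Reachable u x := by
  induction L generalizing ω with
  | nil => exact h
  | cons d L ih => exact ih (reachable_floodMove_of_reachable h)

lemma reachable_floodSeq_of_adj {L : List C} (hx : (monoSubgraph G ω).Reachable u x)
    (hadj : G.Adj x v) (hv : ω v ∈ L) :
    (monoSubgraph G (floodSeq G (L.map (u, ·)) ω)).Reachable u v := by
  induction L generalizing ω with
  | nil => simp at hv
  | cons d L ih =>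
    by_cases hvd : ω v = d
    · exact reachable_floodSeq_of_reachable L (reachable_floodMove_of_adj hx hadj hvd)
    by_cases huv : (monoSubgraph G ω).Reachable u v
    · exact reachable_floodSeq_of_reachable L (reachable_floodMove_of_reachable huv)
    refine ih (reachable_floodMove_of_reachable hx) ?_
    simpa [floodMove, huv, hvd] using hv

variable [Fintype C]

noncomputable def floodRound (ω : V → C) (u : V) : List (V × C) :=
  (Finset.univ.erase (ω u)).toList.map (u, ·)

lemma length_floodRound (ω : V → C) (u : V) :
    (floodRound ω u).length = Fintype.card C - 1 := by
  simp [floodRound, Finset.card_erase_of_mem]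

lemma reachable_floodRound_of_adj (hx : (monoSubgraph G ω).Reachable u x) (hadj : G.Adj x v) :
    (monoSubgraph G (floodSeq G (floodRound ω u) ω)).Reachable u v := by
  by_cases hv : ω v = ω u
  · refine reachable_floodSeq_of_reachable _ (hx.trans (Adj.reachable ⟨hadj, ?_⟩))
    rw [← colour_eq_of_reachable_monoSubgraph hx, hv]
  · exact reachable_floodSeq_of_adj hx hadj (by simp [hv])

lemma exists_floodSeq_ball_reachable (hG : G.Connected) (u : V) (ω : V → C) (k : ℕ) :
    ∃ ms : List (V × C), ms.length = (Fintype.card C - 1) * k ∧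
      ∀ v, G.dist u v ≤ k → (monoSubgraph G (floodSeq G ms ω)).Reachable u v := by
  induction k with
  | zero =>
    refine ⟨[], rfl, fun v hv => ?_⟩
    rw [hG.dist_eq_zero_iff.mp (Nat.le_zero.mp hv)]
  | succ k ih =>
    obtain ⟨ms, hlen, hball⟩ := ih
    refine ⟨ms ++ floodRound (floodSeq G ms ω) u, by simp [hlen, length_floodRound, mul_add],
      fun v hv => ?_⟩
    rw [floodSeq_append]
    rcases hv.lt_or_eq with hlt | heq
    · exact reachable_floodSeq_of_reachable _ (hball v (Nat.lt_succ_iff.mp hlt))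
    · obtain ⟨x, hadj, hx⟩ := exists_adj_dist_le_of_dist_eq_succ heq
      exact reachable_floodRound_of_adj (hball x hx) hadj

lemma floodCostMin_le_of_forall_dist_le (hG : G.Connected) {k : ℕ}
    (hu : ∀ v, G.dist u v ≤ k) (ω : V → C) :
    floodCostMin G ω ≤ (Fintype.card C - 1) * k := by
  obtain ⟨ms, hlen, hball⟩ := exists_floodSeq_ball_reachable hG u ω k
  have hmono : ∀ v, floodSeq G ms ω v = floodSeq G ms ω u :=
    fun v => (colour_eq_of_reachable_monoSubgraph (hball v (hu v))).symm
  calc floodCostMin G ω ≤ floodCost G ω (floodSeq G ms ω u) := Nat.sInf_le ⟨_, rfl⟩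
    _ ≤ (Fintype.card C - 1) * k := Nat.sInf_le ⟨ms, hlen, hmono⟩

end Flooding

/-- For any connected graph `G` with radius `r`, `M_c(G) ≤ (c - 1) * r`. -/
theorem maxFloodCost_le_radius {V : Type*} [Fintype V] (G : SimpleGraph V)
    (hG : G.Connected) (c r : ℕ) (hr : graphRadius G = r) :
    maxFloodCost c G ≤ (c - 1) * r := by
  have := hG.nonempty
  obtain ⟨u, hu⟩ := exists_eq_ciInf_of_finite (f := fun u : V => ⨆ v : V, G.dist u v)
  have hcentre : ∀ v, G.dist u v ≤ r := fun v => by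
    rw [← hr, graphRadius, ← hu]
    exact le_ciSup (Set.finite_range _).bddAbove v
  refine csSup_le' ?_
  rintro _ ⟨ω, -, rfl⟩
  simpa using floodCostMin_le_of_forall_dist_le hG hcentre ω
end
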